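/- Let x : ℝ → ℝ and u : ℝ → ℝ be three times continuously differentiable in a neighbourhood of ξ₀ and of x(ξ₀) respectively, with x'(ξ₀) ≠ 0. Then the non-standard mid-point interpolation formula is second order accurate: as h → 0, [(x(ξ₀ + h/4) − x(ξ₀)) / (x(ξ₀ + h/4) − x(ξ₀ − h/4))]·u(x(ξ₀ − h/2)) + [(x(ξ₀) − x(ξ₀ − h/4)) / (x(ξ₀ + h/4) − x(ξ₀ − h/4))]·u(x(ξ₀ + h/2)) − u(x(ξ₀)) = O(h²). -/

import Mathlib

/-!
Put `A = x(ξ₀ + h/4) - x(ξ₀)`, `B = x(ξ₀) - x(ξ₀ - h/4)` and `w = A / (A + B)`, so that the two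
weights are `w` and `1 - w`, and let `g = u ∘ x`. Expanding `g` to first order at `ξ₀ ± h/2`, the
error is `g'(ξ₀) h (1/2 - w) + O(h²)` as long as `w` stays bounded, so it suffices that
`w - 1/2 = (A - B) / (2 (A + B))` is `O(h)`. This holds because `A - B` is a second central
difference of `x`, hence `O(h²)`, while `A + B = x(ξ₀ + h/4) - x(ξ₀ - h/4)` has derivative
`x'(ξ₀) / 2 ≠ 0` at `h = 0`, hence is bounded below by a multiple of `|h|`.
-/

open Filter Asymptotics
open scoped Topology

section

variable {E : Type*} [NormedAddCommGroup E] [NormedSpace ℝ E]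

theorem isBigO_sub_pow_succ_of_hasDerivAt {f f' : ℝ → E} {p : ℝ} {n : ℕ}
    (hff' : ∀ᶠ y in 𝓝 p, HasDerivAt f (f' y) y) (hf' : f' =O[𝓝 p] fun y => (y - p) ^ n) :
    (fun y => f y - f p) =O[𝓝 p] fun y => (y - p) ^ (n + 1) := by
  obtain ⟨c, hc, hcf'⟩ := hf'.exists_nonneg
  rw [IsBigOWith_def] at hcf'
  have hseg := (convex_univ (𝕜 := ℝ)).eventually_nhdsWithin_segment (Set.mem_univ p)
    (by rw [nhdsWithin_univ]; exact hff'.and hcf')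
  rw [nhdsWithin_univ] at hseg
  refine IsBigO.of_bound c ?_
  filter_upwards [hseg] with y hy
  have hbound : ∀ z ∈ segment ℝ p y, ‖f' z‖ ≤ c * ‖y - p‖ ^ n := fun z hz => by
    refine (hy z hz).2.trans ?_
    rw [norm_pow]
    gcongr
    exact norm_sub_le_of_mem_segment hz
  have := (convex_segment p y).norm_image_sub_le_of_norm_hasDerivWithin_le
    (fun z hz => (hy z hz).1.hasDerivWithinAt) hbound
    (left_mem_segment ℝ p y) (right_mem_segment ℝ p y)
  rw [norm_pow, pow_succ, ← mul_assoc]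
  exact this

theorem ContDiffAt.isBigO_sub_sub_smul_deriv {f : ℝ → E} {p : ℝ} (hf : ContDiffAt ℝ 2 f p) :
    (fun y => f y - f p - (y - p) • deriv f p) =O[𝓝 p] fun y => (y - p) ^ 2 := by
  have hderiv : ∀ᶠ y in 𝓝 p,
      HasDerivAt (fun y => f y - (y - p) • deriv f p) (deriv f y - deriv f p) y := by
    filter_upwards [hf.eventually (by simp)] with y hy
    simpa using (hy.differentiableAt (by norm_num)).hasDerivAt.fun_sub
      (((hasDerivAt_id y).sub_const p).smul_const (deriv f p))
  have hderiv_lip : (fun y => deriv f y - deriv f p) =O[𝓝 p] fun y => (y - p) ^ 1 := by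
    simpa using ((hf.derivWithin (m := 1) (by norm_num)).differentiableAt
      (by norm_num)).isBigO_sub
  simpa [sub_right_comm] using isBigO_sub_pow_succ_of_hasDerivAt hderiv hderiv_lip

theorem ContDiffAt.isBigO_sub_sub_smul_deriv_comp_add_mul {f : ℝ → E} {p : ℝ}
    (hf : ContDiffAt ℝ 2 f p) (c : ℝ) :
    (fun h => f (p + c * h) - f p - (c * h) • deriv f p) =O[𝓝 0] fun h : ℝ => h ^ 2 := by
  have hlin : Tendsto (fun h : ℝ => p + c * h) (𝓝 0) (𝓝 p) := by
    simpa using ((continuous_const_mul c).const_add p).tendsto 0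
  have hsq : (fun h : ℝ => (p + c * h - p) ^ 2) =O[𝓝 0] fun h : ℝ => h ^ 2 := by
    simpa [mul_pow] using isBigO_const_mul_self (c ^ 2) (fun h : ℝ => h ^ 2) (𝓝 0)
  exact ((hf.isBigO_sub_sub_smul_deriv.comp_tendsto hlin).trans hsq).congr_left fun h => by simp

theorem ContDiffAt.isBigO_second_central_difference {f : ℝ → E} {p : ℝ} (hf : ContDiffAt ℝ 2 f p)
    (c : ℝ) : (fun h => f (p + c * h) - 2 • f p + f (p - c * h)) =O[𝓝 0] fun h : ℝ => h ^ 2 := by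
  refine ((hf.isBigO_sub_sub_smul_deriv_comp_add_mul c).add
    (hf.isBigO_sub_sub_smul_deriv_comp_add_mul (-c))).congr_left fun h => ?_
  simp only [neg_mul, ← sub_eq_add_neg, neg_smul]
  module

end

theorem HasDerivAt.isBigO_central_difference_rev {f : ℝ → ℝ} {f' p : ℝ}
    (hf : HasDerivAt f f' p) (hf' : f' ≠ 0) {c : ℝ} (hc : c ≠ 0) :
    (fun h => h) =O[𝓝 0] fun h => f (p + c * h) - f (p - c * h) := by
  have hdiff : HasDerivAt (fun h => f (p + c * h) - f (p - c * h)) (2 * c * f') 0 := by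
    have hplus := hf.comp_of_eq 0 (((hasDerivAt_id 0).const_mul c).const_add p) (by simp)
    have hminus := hf.comp_of_eq 0 (((hasDerivAt_id 0).const_mul c).const_sub p) (by simp)
    exact (hplus.sub hminus).congr_deriv (by ring)
  have hne : 2 * c * f' ≠ 0 := by positivity
  simpa [Function.comp_def] using (hdiff.isTheta_sub hne).isBigO_symm.comp_tendsto
    (tendsto_id.prodMk tendsto_const_pure)

theorem isBigO_div_add_sub_half {A B : ℝ → ℝ} {l : Filter ℝ}
    (hAB : (fun h => A h - B h) =O[l] fun h => h ^ 2)
    (hsum : (fun h => h) =O[l] fun h => A h + B h)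
    (hl : ∀ᶠ h in l, h ≠ 0) :
    (fun h => A h / (A h + B h) - 1 / 2) =O[l] fun h => h := by
  have hsum_ne : ∀ᶠ h in l, A h + B h ≠ 0 := by
    filter_upwards [hsum.eq_zero_imp, hl] with h hzero hh using mt hzero hh
  have hinv : (fun h => (A h + B h)⁻¹) =O[l] fun h => h⁻¹ :=
    hsum.inv_rev (hl.mono fun h hh h0 => absurd h0 hh)
  refine ((hAB.mul hinv).const_mul_left (1 / 2)).congr' ?_ ?_
  · filter_upwards [hsum_ne] with h hh
    field_simp
    ring
  · filter_upwards [hl] with h hh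
    field_simp

theorem ContDiffAt.isBigO_affine_interpolation_sub {g : ℝ → ℝ} {p : ℝ}
    (hg : ContDiffAt ℝ 2 g p) (c : ℝ) {w : ℝ → ℝ} {l : Filter ℝ} (hl : l ≤ 𝓝 0)
    (hw : (fun h => w h - 1 / 2) =O[l] fun h => h) :
    (fun h => w h * g (p - c * h) + (1 - w h) * g (p + c * h) - g p) =O[l] fun h => h ^ 2 := by
  have hid : (fun h : ℝ => h) =O[l] fun _ => (1 : ℝ) :=
    ((continuous_id.tendsto 0).mono_left hl).isBigO_one ℝ
  have hw_bdd : w =O[l] fun _ => (1 : ℝ) :=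
    ((hw.trans hid).add (isBigO_const_const (1 / 2 : ℝ) one_ne_zero l)).congr_left
      fun h => by ring
  have hw'_bdd : (fun h => 1 - w h) =O[l] fun _ => (1 : ℝ) :=
    (isBigO_const_const (1 : ℝ) one_ne_zero l).sub hw_bdd
  have hminus : (fun h => g (p - c * h) - g p - (-c * h) * deriv g p) =O[l] fun h => h ^ 2 :=
    ((hg.isBigO_sub_sub_smul_deriv_comp_add_mul (-c)).mono hl).congr_left fun h => by
      simp [sub_eq_add_neg]
  have hplus := (hg.isBigO_sub_sub_smul_deriv_comp_add_mul c).mono hl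
  have hlinear : (fun h => -2 * c * deriv g p * h * (w h - 1 / 2)) =O[l] fun h => h ^ 2 :=
    ((isBigO_const_mul_self _ _ _).mul hw).congr_right fun h => by ring
  have hbdd_mul {a b : ℝ → ℝ} (ha : a =O[l] fun _ => (1 : ℝ)) (hb : b =O[l] fun h => h ^ 2) :
      (fun h => a h * b h) =O[l] fun h => h ^ 2 :=
    (ha.mul hb).congr_right fun _ => one_mul _
  refine (((hbdd_mul hw_bdd hminus).add (hbdd_mul hw'_bdd hplus)).add hlinear).congr_left
    fun h => ?_
  simp only [smul_eq_mul]
  ring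

/-- The non-standard mid-point interpolation formula on a quasi-uniform grid is second
order accurate: as `h → 0`,
`[(x(ξ₀+h/4)−x(ξ₀))/(x(ξ₀+h/4)−x(ξ₀−h/4))]·u(x(ξ₀−h/2)) +
 [(x(ξ₀)−x(ξ₀−h/4))/(x(ξ₀+h/4)−x(ξ₀−h/4))]·u(x(ξ₀+h/2)) − u(x(ξ₀)) = O(h²)`. -/
theorem nonstandard_midpoint_interpolation_second_order (x u : ℝ → ℝ) (ξ₀ : ℝ)
    (hx : ContDiffAt ℝ 3 x ξ₀) (hu : ContDiffAt ℝ 3 u (x ξ₀))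
    (hx' : deriv x ξ₀ ≠ 0) :
    (fun h : ℝ =>
        (x (ξ₀ + h / 4) - x ξ₀) / (x (ξ₀ + h / 4) - x (ξ₀ - h / 4)) * u (x (ξ₀ - h / 2)) +
          (x ξ₀ - x (ξ₀ - h / 4)) / (x (ξ₀ + h / 4) - x (ξ₀ - h / 4)) * u (x (ξ₀ + h / 2)) -
          u (x ξ₀)) =O[nhdsWithin 0 {(0 : ℝ)}ᶜ] fun h : ℝ => h ^ 2 := by
  have hx2 : ContDiffAt ℝ 2 x ξ₀ := hx.of_le (by norm_num)
  have hux : ContDiffAt ℝ 2 (u ∘ x) ξ₀ := (hu.comp ξ₀ hx).of_le (by norm_num)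
  have hne : ∀ᶠ h in 𝓝[≠] (0 : ℝ), h ≠ 0 := self_mem_nhdsWithin
  have hAB : (fun h => (x (ξ₀ + h / 4) - x ξ₀) - (x ξ₀ - x (ξ₀ - h / 4))) =O[𝓝 0]
      fun h : ℝ => h ^ 2 :=
    (hx2.isBigO_second_central_difference 4⁻¹).congr_left fun h => by
      simp only [inv_mul_eq_div]; module
  have hsum : (fun h : ℝ => h) =O[𝓝 0]
      fun h => (x (ξ₀ + h / 4) - x ξ₀) + (x ξ₀ - x (ξ₀ - h / 4)) :=
    ((hx2.differentiableAt (by norm_num)).hasDerivAt.isBigO_central_difference_rev hx'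
      (c := 4⁻¹) (by norm_num)).congr_right fun h => by
      simp only [inv_mul_eq_div]; ring
  have hw := isBigO_div_add_sub_half (hAB.mono nhdsWithin_le_nhds)
    (hsum.mono nhdsWithin_le_nhds) hne
  have hinterp := hux.isBigO_affine_interpolation_sub 2⁻¹ nhdsWithin_le_nhds hw
  refine hinterp.congr' ?_ EventuallyEq.rfl
  filter_upwards [hsum.eq_zero_imp.filter_mono nhdsWithin_le_nhds, hne] with h hzero hh
  have hD : x (ξ₀ + h / 4) - x (ξ₀ - h / 4) ≠ 0 := fun h0 => hh (hzero (by linarith))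
  simp only [Function.comp_apply, inv_mul_eq_div, sub_add_sub_cancel]
  rw [one_sub_div hD]
  ring
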